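/- arXiv:2012.02392 — 2 statements merged into one kernel-verified Lean document; each statement's English description precedes it below -/
import Mathlib

section
/- For a Poisson random variable X with mean μ > 0 and positive integer q ≥ 1, the conditional expectation E[X | X ≤ q-1] = μ·P(X ≤ q-2)/P(X ≤ q-1) is increasing in μ and bounded above by q-1. -/
open scoped BigOperators

/-- The Poisson probability mass function with real mean parameter `μ`. -/
noncomputable def poissonPMF (μ : ℝ) (n : ℕ) : ℝ := Real.exp (-μ) * μ ^ n / n.factorial

/-- The conditional expectation `E[X | X ≤ q - 1]` for `X ~ Poisson(μ)`,
where `q` is a positive integer. -/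
noncomputable def condExpLe (q : ℕ) (μ : ℝ) : ℝ :=
  (∑ n ∈ Finset.range q, (n : ℝ) * poissonPMF μ n) / (∑ n ∈ Finset.range q, poissonPMF μ n)

/-!
Since `n * P(X = n) = μ * P(X = n - 1)`, the numerator of `E[X | X ≤ q - 1]` is
`μ * P(X ≤ q - 2)`. The conditional mean is the mean of `n` under the weights `μ ^ n / n!` on
`{0, …, q - 1}`; replacing `μ` by `ν ≥ μ` multiplies these weights by `(ν / μ) ^ n`, which
increases with `n`, so the weighted Chebyshev sum inequality makes the mean grow.
-/

open Finset

theorem MonovaryOn.sum_mul_sum_mul_le_sum_mul_sum_mul {ι : Type*} {s : Finset ι}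
    {w f g : ι → ℝ} (hw : ∀ i ∈ s, 0 ≤ w i) (hfg : MonovaryOn f g s) :
    (∑ i ∈ s, w i * f i) * ∑ i ∈ s, w i * g i ≤
      (∑ i ∈ s, w i) * ∑ i ∈ s, w i * (f i * g i) := by
  have hnonneg : 0 ≤ ∑ i ∈ s, ∑ j ∈ s, w i * w j * ((f j - f i) * (g j - g i)) :=
    sum_nonneg fun i hi => sum_nonneg fun j hj =>
      mul_nonneg (mul_nonneg (hw i hi) (hw j hj)) (hfg.sub_mul_sub_nonneg hi hj)
  have hsymm : ∑ i ∈ s, ∑ j ∈ s, w i * w j * ((f j - f i) * (g j - g i)) =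
      ((∑ i ∈ s, w i) * ∑ j ∈ s, w j * (f j * g j) -
        (∑ i ∈ s, w i * g i) * ∑ j ∈ s, w j * f j) -
      ((∑ i ∈ s, w i * f i) * ∑ j ∈ s, w j * g j -
        (∑ i ∈ s, w i * (f i * g i)) * ∑ j ∈ s, w j) := by
    simp only [sum_mul_sum, ← sum_sub_distrib]
    exact sum_congr rfl fun i _ => sum_congr rfl fun j _ => by ring
  linarith

theorem monotoneOn_sum_mul_pow_mul_div_sum_mul_pow {s : Finset ℕ} (hs : s.Nonempty)
    {c f : ℕ → ℝ} (hc : ∀ n ∈ s, 0 < c n) (hf : Monotone f) :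
    MonotoneOn (fun x => (∑ n ∈ s, c n * x ^ n * f n) / ∑ n ∈ s, c n * x ^ n) (Set.Ioi 0) := by
  intro x (hx : 0 < x) y (hy : 0 < y) hxy
  have hden {z : ℝ} (hz : 0 < z) : 0 < ∑ n ∈ s, c n * z ^ n :=
    sum_pos (fun n hn => mul_pos (hc n hn) (pow_pos hz n)) hs
  have hreweight (n : ℕ) : c n * x ^ n * (y / x) ^ n = c n * y ^ n := by
    rw [div_pow, mul_assoc, mul_div_cancel₀ _ (pow_ne_zero n hx.ne')]
  have hg : Monotone fun n : ℕ => (y / x) ^ n := pow_right_mono₀ ((one_le_div hx).2 hxy)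
  have key := (hf.monovary hg).monovaryOn (s : Set ℕ) |>.sum_mul_sum_mul_le_sum_mul_sum_mul
    (w := fun n => c n * x ^ n) fun n hn => (mul_pos (hc n hn) (pow_pos hx n)).le
  simp only [hreweight, ← mul_assoc, mul_right_comm _ (f _)] at key
  rw [div_le_div_iff₀ (hden hx) (hden hy)]
  simpa only [mul_comm (∑ n ∈ s, c n * x ^ n)] using key

theorem poissonPMF_pos {μ : ℝ} (hμ : 0 < μ) (n : ℕ) : 0 < poissonPMF μ n := by
  unfold poissonPMF; positivity

theorem succ_mul_poissonPMF_succ (μ : ℝ) (n : ℕ) :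
    ((n + 1 : ℕ) : ℝ) * poissonPMF μ (n + 1) = μ * poissonPMF μ n := by
  unfold poissonPMF
  rw [Nat.factorial_succ, Nat.cast_mul]
  field_simp
  ring

theorem sum_range_mul_poissonPMF {q : ℕ} (hq : 1 ≤ q) (μ : ℝ) :
    ∑ n ∈ range q, (n : ℝ) * poissonPMF μ n = μ * ∑ n ∈ range (q - 1), poissonPMF μ n := by
  obtain ⟨p, rfl⟩ := Nat.exists_eq_add_of_le' hq
  rw [sum_range_succ', Nat.add_sub_cancel, mul_sum]
  simp only [succ_mul_poissonPMF_succ, Nat.cast_zero, zero_mul, add_zero]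

theorem condExpLe_eq_sum_pow (q : ℕ) (μ : ℝ) :
    condExpLe q μ = (∑ n ∈ range q, (n.factorial : ℝ)⁻¹ * μ ^ n * n) /
      ∑ n ∈ range q, (n.factorial : ℝ)⁻¹ * μ ^ n := by
  have hpmf (n : ℕ) : poissonPMF μ n = Real.exp (-μ) * ((n.factorial : ℝ)⁻¹ * μ ^ n) := by
    unfold poissonPMF; ring
  have hterm (n : ℕ) :
      n * poissonPMF μ n = Real.exp (-μ) * ((n.factorial : ℝ)⁻¹ * μ ^ n * n) := by
    rw [hpmf]; ring
  simp only [condExpLe, hterm, ← mul_sum]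
  simp only [hpmf, ← mul_sum]
  exact mul_div_mul_left _ _ (Real.exp_ne_zero _)

theorem condExpLe_le {q : ℕ} (hq : 1 ≤ q) {μ : ℝ} (hμ : 0 < μ) : condExpLe q μ ≤ q - 1 := by
  have hden : 0 < ∑ n ∈ range q, poissonPMF μ n :=
    sum_pos (fun n _ => poissonPMF_pos hμ n) ⟨0, mem_range.2 hq⟩
  rw [condExpLe, div_le_iff₀ hden, mul_sum]
  refine sum_le_sum fun n hn => mul_le_mul_of_nonneg_right ?_ (poissonPMF_pos hμ n).le
  have : (n : ℝ) + 1 ≤ q := by exact_mod_cast mem_range.1 hn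
  linarith

/-- For `X ~ Poisson(μ)` with `μ > 0` and a positive integer `q`, the conditional expectation
`E[X | X ≤ q-1]` equals `μ ⬝ P(X ≤ q-2) / P(X ≤ q-1)`, is increasing in `μ` on `(0, ∞)`,
and is bounded above by `q - 1`. -/
theorem stmt7 (q : ℕ) (hq : 1 ≤ q) :
    (∀ μ : ℝ, 0 < μ →
        condExpLe q μ =
          μ * (∑ n ∈ Finset.range (q - 1), poissonPMF μ n) /
            (∑ n ∈ Finset.range q, poissonPMF μ n)) ∧
      MonotoneOn (condExpLe q) (Set.Ioi 0) ∧
      (∀ μ : ℝ, 0 < μ → condExpLe q μ ≤ (q : ℝ) - 1) := by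
  refine ⟨fun μ _ => by rw [condExpLe, sum_range_mul_poissonPMF hq], ?_,
    fun μ hμ => condExpLe_le hq hμ⟩
  have hmono := monotoneOn_sum_mul_pow_mul_div_sum_mul_pow ⟨0, mem_range.2 hq⟩
    (c := fun n => (n.factorial : ℝ)⁻¹) (fun n _ => by positivity) Nat.mono_cast
  simpa only [← condExpLe_eq_sum_pow] using hmono
end

section
/- For a Poisson random variable X with mean μ > 0 and positive integer q, as μ → ∞ the ratio (E[X_q])³ / E[X_{q+1}(X_{q+1}-1)(X_{q+1}-2)] converges to q²/(q²-1) (for q ≥ 2). -/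
/-!
A function that is constant, equal to `c`, from `m` on differs from `c` only at the finitely many
points `n < m`, and each Poisson weight `e^{-μ} μⁿ / n!` tends to `0` as `μ → ∞`.
Since the weights sum to `1`, the Poisson expectation of such a function tends to `c`. Both
truncated moments in the ratio are of this kind, with limits `q` and `(q + 1) q (q - 1)`, and
`q³ / ((q + 1) q (q - 1)) = q² / (q² - 1)`.
-/

open Filter

lemma hasSum_poissonPMF (μ : ℝ) : HasSum (poissonPMF μ) 1 := by
  have h := (NormedSpace.expSeries_div_hasSum_exp μ).mul_left (Real.exp (-μ))
  rw [← Real.exp_eq_exp_ℝ, ← Real.exp_add, neg_add_cancel, Real.exp_zero] at h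
  exact h.congr_fun fun n => mul_div_assoc _ _ _

lemma tsum_poissonPMF_mul_of_forall_ge_eq (μ : ℝ) {f : ℕ → ℝ} {m : ℕ} {c : ℝ}
    (hf : ∀ n, m ≤ n → f n = c) :
    ∑' n, poissonPMF μ n * f n = c + ∑ n ∈ Finset.range m, poissonPMF μ n * (f n - c) := by
  have hfin : ∀ n ∉ Finset.range m, poissonPMF μ n * (f n - c) = 0 := fun n hn => by
    rw [hf n (by simpa using hn), sub_self, mul_zero]
  have hsplit : HasSum (fun n => poissonPMF μ n * c + poissonPMF μ n * (f n - c))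
      (c + ∑ n ∈ Finset.range m, poissonPMF μ n * (f n - c)) := by
    simpa only [one_mul] using
      ((hasSum_poissonPMF μ).mul_right c).add (hasSum_sum_of_ne_finset_zero hfin)
  exact (hsplit.congr_fun fun n => by ring).tsum_eq

lemma tendsto_poissonPMF_atTop (n : ℕ) : Tendsto (fun μ => poissonPMF μ n) atTop (nhds 0) := by
  simpa only [poissonPMF, mul_comm (Real.exp _), zero_div] using
    (Real.tendsto_pow_mul_exp_neg_atTop_nhds_zero n).div_const (n.factorial : ℝ)

lemma tendsto_tsum_poissonPMF_mul_of_forall_ge_eq {f : ℕ → ℝ} {m : ℕ} {c : ℝ}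
    (hf : ∀ n, m ≤ n → f n = c) :
    Tendsto (fun μ => ∑' n, poissonPMF μ n * f n) atTop (nhds c) := by
  simp only [tsum_poissonPMF_mul_of_forall_ge_eq _ hf]
  have hsum : Tendsto (fun μ => ∑ n ∈ Finset.range m, poissonPMF μ n * (f n - c))
      atTop (nhds 0) := by
    simpa using tendsto_finsetSum _ fun n _ => (tendsto_poissonPMF_atTop n).mul_const (f n - c)
  simpa using hsum.const_add c

/-- For `X ~ Poisson(μ)` and an integer `q ≥ 2`, as `μ → ∞` the ratio
`(E[X_q])³ / E[X_{q+1} (X_{q+1} - 1) (X_{q+1} - 2)]` converges to `q² / (q² - 1)`,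
where `X_m = min(X, m)`. -/
theorem stmt9 (q : ℕ) (hq : 2 ≤ q) :
    Tendsto
      (fun μ : ℝ =>
        (∑' n : ℕ, poissonPMF μ n * (min n q : ℝ)) ^ 3 /
          (∑' n : ℕ, poissonPMF μ n * ((min n (q + 1)).descFactorial 3 : ℝ)))
      atTop (nhds ((q : ℝ) ^ 2 / ((q : ℝ) ^ 2 - 1))) := by
  have hmean : Tendsto (fun μ => ∑' n : ℕ, poissonPMF μ n * (min n q : ℝ)) atTop (nhds q) :=
    tendsto_tsum_poissonPMF_mul_of_forall_ge_eq fun n hn => by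
      rw [min_eq_right (by exact_mod_cast hn)]
  have hfact : Tendsto
      (fun μ => ∑' n : ℕ, poissonPMF μ n * ((min n (q + 1)).descFactorial 3 : ℝ)) atTop
      (nhds ((q + 1) * q * (q - 1))) := by
    refine tendsto_tsum_poissonPMF_mul_of_forall_ge_eq (m := q + 1) fun n hn => ?_
    rw [min_eq_right hn, Nat.descFactorial_succ, Nat.descFactorial_succ, Nat.descFactorial_one]
    push_cast [show 1 ≤ q by omega]
    ring
  have hq' : (2 : ℝ) ≤ q := by exact_mod_cast hq
  have hlimit : (q : ℝ) ^ 2 / ((q : ℝ) ^ 2 - 1) = (q : ℝ) ^ 3 / ((q + 1) * q * (q - 1)) := by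
    rw [show (q : ℝ) ^ 3 = q ^ 2 * q by ring,
      show ((q : ℝ) + 1) * q * (q - 1) = (q ^ 2 - 1) * q by ring,
      mul_div_mul_right _ _ (by positivity)]
  rw [hlimit]
  exact (hmean.pow 3).div hfact (by nlinarith)
end
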